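/- arXiv:1508.06448 — 4 statements merged into one kernel-verified Lean document; each statement's English description precedes it below -/
import Mathlib

section
/- Let M be a detailed balanced Markov process on a finite set N with rate constants r : E → (0,∞) and equilibrium populations q : N → (0,∞), and define the extended dissipation functional C(p) = (1/4) ∑_{e ∈ E} r_e q_{s(e)} (p_{s(e)}/q_{s(e)} − p_{t(e)}/q_{t(e)})². If a time-dependent population p(t) obeys the master equation dp_n/dt = ∑_j H_{nj} p_j at a state n, then dp_n/dt = −q_n ∂C/∂p_n. -/
/-!
Writing `x = p / q`, the partial derivative `q n ∂C/∂p n` is half the difference between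
`∑_{e : n → _} r_e q_n (x_n - x_{t e})` and `∑_{e : _ → n} r_e q_{s e} (x_{s e} - x_n)`.
Detailed balance says that the flux `r_e q_i` from `i` to `j` equals the flux back, so the first
sum can be rewritten over the edges entering `n` and equals minus the second. What remains,
`∑_{e : _ → n} r_e q_{s e} (x_{s e} - x_n)`, is inflow minus outflow at `n`, i.e. `(H p)_n`.
-/

open Finset

section MarkovProcess

variable {N E : Type*} [Fintype E] (s t : E → N) (r : E → ℝ) (q : N → ℝ)

def DetailedBalance [DecidableEq N] : Prop :=
  ∀ i j : N, ∑ e ∈ univ.filter (fun e => s e = i ∧ t e = j), r e * q i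
    = ∑ e ∈ univ.filter (fun e => s e = j ∧ t e = i), r e * q j

noncomputable def dissipation (p : N → ℝ) : ℝ :=
  (1/4) * ∑ e, r e * q (s e) * (p (s e) / q (s e) - p (t e) / q (t e))^2

variable {s t r q}

theorem sum_filter_mul_comp_eq_sum_fiberwise [Fintype N] [DecidableEq N]
    (P : E → Prop) [DecidablePred P] (g : E → ℝ) (f : N → ℝ) :
    ∑ e ∈ univ.filter P, g e * f (t e)
      = ∑ j, (∑ e ∈ univ.filter (fun e => P e ∧ t e = j), g e) * f j := by
  rw [← sum_fiberwise (univ.filter P) t]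
  refine sum_congr rfl fun j _ => ?_
  rw [filter_filter, sum_mul]
  exact sum_congr rfl fun e he => by rw [(mem_filter.mp he).2.2]

theorem sum_source_eq_sum_target [Fintype N] [DecidableEq N] (h_db : DetailedBalance s t r q)
    (n : N) (f : N → ℝ) :
    ∑ e ∈ univ.filter (fun e => s e = n), r e * q n * f (t e)
      = ∑ e ∈ univ.filter (fun e => t e = n), r e * q (s e) * f (s e) := by
  rw [sum_filter_mul_comp_eq_sum_fiberwise, sum_filter_mul_comp_eq_sum_fiberwise (t := s)]
  refine sum_congr rfl fun j _ => ?_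
  have h_in : ∑ e ∈ univ.filter (fun e => t e = n ∧ s e = j), r e * q (s e)
      = ∑ e ∈ univ.filter (fun e => s e = j ∧ t e = n), r e * q j :=
    sum_congr (filter_congr fun _ _ => and_comm) fun e he => by rw [(mem_filter.mp he).2.1]
  rw [h_in, ← h_db n j]

theorem sum_mul_apply_eq_inflow_sub_outflow [Fintype N] [DecidableEq N] {H : Matrix N N ℝ}
    (hH_off : ∀ i j, i ≠ j → H i j = ∑ e ∈ univ.filter (fun e => s e = j ∧ t e = i), r e)
    (hH_diag : ∀ i, H i i = -∑ e ∈ univ.filter (fun e => s e = i ∧ t e ≠ i), r e)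
    (p : N → ℝ) (n : N) :
    ∑ j, H n j * p j
      = ∑ e ∈ univ.filter (fun e => t e = n), r e * p (s e)
        - (∑ e ∈ univ.filter (fun e => s e = n), r e) * p n := by
  have h_entry (j : N) : H n j = ∑ e ∈ univ.filter (fun e => t e = n ∧ s e = j), r e
      - if j = n then ∑ e ∈ univ.filter (fun e => s e = n), r e else 0 := by
    rw [filter_congr fun _ _ => and_comm]
    split_ifs with hj
    · subst hj
      rw [hH_diag, ← sum_filter_add_sum_filter_not (univ.filter (fun e => s e = j)) (t · = j),
        filter_filter, filter_filter]
      ring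
    · rw [hH_off n j (Ne.symm hj), sub_zero]
  simp only [h_entry, sub_mul, sum_sub_distrib, ite_mul, zero_mul, sum_ite_eq', mem_univ, if_true]
  rw [sum_filter_mul_comp_eq_sum_fiberwise (t := s)]

theorem hasFDerivAt_dissipation [Fintype N] (p : N → ℝ) :
    HasFDerivAt (dissipation s t r q)
      ((1/4 : ℝ) • ∑ e, (r e * q (s e)) • (2 * (p (s e) / q (s e) - p (t e) / q (t e))) •
        ((q (s e))⁻¹ • (ContinuousLinearMap.proj (s e) : (N → ℝ) →L[ℝ] ℝ)
          - (q (t e))⁻¹ • ContinuousLinearMap.proj (t e))) p := by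
  have h_div (i : N) : HasFDerivAt (fun y : N → ℝ => y i / q i)
      ((q i)⁻¹ • (ContinuousLinearMap.proj i : (N → ℝ) →L[ℝ] ℝ)) p := by
    simpa only [div_eq_mul_inv] using (hasFDerivAt_apply (𝕜 := ℝ) i p).mul_const (q i)⁻¹
  unfold dissipation
  refine HasFDerivAt.const_mul (HasFDerivAt.fun_sum fun e _ => ?_) (1/4 : ℝ)
  simpa using (((h_div (s e)).sub (h_div (t e))).pow 2).const_mul (r e * q (s e))

theorem mul_fderiv_dissipation_single [Fintype N] [DecidableEq N] (hq : ∀ i, q i ≠ 0)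
    (p : N → ℝ) (n : N) :
    q n * fderiv ℝ (dissipation s t r q) p (Pi.single n 1)
      = (1/2) *
        (∑ e ∈ univ.filter (fun e => s e = n), r e * q n * (p n / q n - p (t e) / q (t e))
          - ∑ e ∈ univ.filter (fun e => t e = n),
              r e * q (s e) * (p (s e) / q (s e) - p n / q n)) := by
  rw [(hasFDerivAt_dissipation p).fderiv, sum_filter, sum_filter, ← sum_sub_distrib, mul_sum]
  simp only [smul_apply, _root_.sum_apply, sub_apply, ContinuousLinearMap.proj_apply,
    Pi.single_apply, smul_eq_mul, mul_sum]
  refine sum_congr rfl fun e _ => ?_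
  split_ifs with hs ht ht <;> (try rw [hs]) <;> (try rw [ht]) <;> field_simp [hq] <;> ring

theorem sum_target_mul_gap_eq_inflow_sub_outflow [Fintype N] [DecidableEq N]
    (h_db : DetailedBalance s t r q) (hq : ∀ i, q i ≠ 0) (p : N → ℝ) (n : N) :
    ∑ e ∈ univ.filter (fun e => t e = n), r e * q (s e) * (p (s e) / q (s e) - p n / q n)
      = ∑ e ∈ univ.filter (fun e => t e = n), r e * p (s e)
        - (∑ e ∈ univ.filter (fun e => s e = n), r e) * p n := by
  simp only [mul_sub, sum_sub_distrib]
  rw [← sum_source_eq_sum_target h_db n (fun _ => p n / q n), sum_mul]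
  congr 1 <;> exact sum_congr rfl fun e _ => by field_simp [hq]

theorem mul_fderiv_dissipation_single_eq_outflow_sub_inflow [Fintype N] [DecidableEq N]
    (h_db : DetailedBalance s t r q) (hq : ∀ i, q i ≠ 0) (p : N → ℝ) (n : N) :
    q n * fderiv ℝ (dissipation s t r q) p (Pi.single n 1)
      = (∑ e ∈ univ.filter (fun e => s e = n), r e) * p n
        - ∑ e ∈ univ.filter (fun e => t e = n), r e * p (s e) := by
  have h_out := sum_source_eq_sum_target h_db n (fun j => p n / q n - p j / q j)
  have h_antisymm :
      ∑ e ∈ univ.filter (fun e => t e = n), r e * q (s e) * (p n / q n - p (s e) / q (s e))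
        = -∑ e ∈ univ.filter (fun e => t e = n),
            r e * q (s e) * (p (s e) / q (s e) - p n / q n) := by
    rw [← sum_neg_distrib]
    exact sum_congr rfl fun _ _ => by ring
  rw [mul_fderiv_dissipation_single hq, h_out, h_antisymm,
    sum_target_mul_gap_eq_inflow_sub_outflow h_db hq]
  ring

end MarkovProcess

theorem master_equation_dissipation_general
    {N E : Type} [Fintype N] [Fintype E] [DecidableEq N]
    (s t : E → N) (r : E → ℝ)
    (q : N → ℝ) (hq : ∀ i, 0 < q i)
    (h_db : ∀ i j : N,
      ∑ e ∈ univ.filter (fun e => s e = i ∧ t e = j), r e * q i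
        = ∑ e ∈ univ.filter (fun e => s e = j ∧ t e = i), r e * q j)
    (H : Matrix N N ℝ)
    (hH_off : ∀ i j, i ≠ j → H i j = ∑ e ∈ univ.filter (fun e => s e = j ∧ t e = i), r e)
    (hH_diag : ∀ i, H i i = -∑ e ∈ univ.filter (fun e => s e = i ∧ t e ≠ i), r e)
    (C : (N → ℝ) → ℝ)
    (hC : ∀ p : N → ℝ,
      C p = (1/4) * ∑ e, r e * q (s e) * (p (s e) / q (s e) - p (t e) / q (t e))^2)
    (p : ℝ → N → ℝ) (n : N) (τ : ℝ)
    (h_master : HasDerivAt (fun u => p u n) (∑ j, H n j * p τ j) τ) :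
    deriv (fun u => p u n) τ = -(q n * fderiv ℝ C (p τ) (Pi.single n 1)) := by
  obtain rfl : C = dissipation s t r q := funext hC
  rw [h_master.deriv, sum_mul_apply_eq_inflow_sub_outflow hH_off hH_diag,
    mul_fderiv_dissipation_single_eq_outflow_sub_inflow h_db (fun i => (hq i).ne'), neg_sub]

/-- For a detailed balanced Markov process, if a time-dependent population
obeys the master equation at a state n, then dp_n/dt = −q_n ∂C/∂p_n, where C
is the extended dissipation functional. -/
theorem master_equation_dissipation
    {N E : Type} [Fintype N] [Fintype E] [DecidableEq N]
    (s t : E → N) (r : E → ℝ) (hr : ∀ e, 0 < r e)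
    (q : N → ℝ) (hq : ∀ i, 0 < q i)
    (h_db : ∀ i j : N,
      ∑ e ∈ univ.filter (fun e => s e = i ∧ t e = j), r e * q i
        = ∑ e ∈ univ.filter (fun e => s e = j ∧ t e = i), r e * q j)
    (H : Matrix N N ℝ)
    (hH_off : ∀ i j, i ≠ j → H i j = ∑ e ∈ univ.filter (fun e => s e = j ∧ t e = i), r e)
    (hH_diag : ∀ i, H i i = -∑ e ∈ univ.filter (fun e => s e = i ∧ t e ≠ i), r e)
    (C : (N → ℝ) → ℝ)
    (hC : ∀ p : N → ℝ,
      C p = (1/4) * ∑ e, r e * q (s e) * (p (s e) / q (s e) - p (t e) / q (t e))^2)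
    (p : ℝ → N → ℝ) (n : N) (τ : ℝ)
    (h_master : HasDerivAt (fun u => p u n) (∑ j, H n j * p τ j) τ) :
    deriv (fun u => p u n) τ = -(q n * fderiv ℝ C (p τ) (Pi.single n 1)) :=
  master_equation_dissipation_general s t r q hq h_db H hH_off hH_diag C hC p n τ h_master
end

section
/- For a detailed balanced Markov process, −q_n ∂C/∂p_n = ∑_{m ∈ N} [∑_{e : m → n} r_e p_m − ∑_{e : n → m} r_e p_n], where C is the extended dissipation functional C(p) = (1/4) ∑_{e ∈ E} r_e q_{s(e)} (p_{s(e)}/q_{s(e)} − p_{t(e)}/q_{t(e)})². -/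
/- With flux `w e = r e * q (s e)`, `u = p / q` and `δ` the indicator of `n`, the left side is
`½ ∑ w (u (s e) - u (t e)) (δ (t e) - δ (s e))`, the derivative of a quadratic form being its
polarisation. Detailed balance makes the flux symmetric under reversing edges, so this equals its
source half `∑ w u (s e) (δ (t e) - δ (s e))`, and `w e * u (s e) = r e * p (s e)` makes that
inflow minus outflow at `n`. -/

open Finset

section DetailedBalance

variable {N E R : Type*} [Fintype N] [Fintype E] [DecidableEq N]

theorem sum_eq_sum_sum_filter_source_target [AddCommMonoid R] (s t : E → N) (F : E → R) :
    ∑ e, F e = ∑ i, ∑ j, ∑ e ∈ univ.filter (fun e => s e = i ∧ t e = j), F e := by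
  rw [← sum_fiberwise univ (fun e => ((s e, t e) : N × N)) F, Fintype.sum_prod_type]
  simp only [Prod.mk.injEq]

theorem sum_inflow_sub_outflow [CommRing R] (s t : E → N) (r : E → R) (p : N → R) (n : N) :
    ∑ m, ((∑ e ∈ univ.filter (fun e => s e = m ∧ t e = n), r e * p m)
        - ∑ e ∈ univ.filter (fun e => s e = n ∧ t e = m), r e * p n)
      = ∑ e, r e * p (s e) * ((Pi.single n 1 : N → R) (t e) - (Pi.single n 1 : N → R) (s e)) := by
  simp only [sum_filter, sum_sub_distrib]
  rw [Finset.sum_comm, Finset.sum_comm (f := fun m e => if s e = n ∧ t e = m then _ else _)]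
  simp only [ite_and, sum_ite_eq, mem_univ, if_true, ← sum_sub_distrib]
  refine sum_congr rfl fun e _ => ?_
  by_cases hs : s e = n <;> by_cases ht : t e = n <;> simp [hs, ht]

theorem sum_mul_apply_swap_of_symmetric [CommSemiring R] (s t : E → N) (w : E → R)
    (hw : ∀ i j, ∑ e ∈ univ.filter (fun e => s e = i ∧ t e = j), w e
      = ∑ e ∈ univ.filter (fun e => s e = j ∧ t e = i), w e)
    (f : N → N → R) :
    ∑ e, w e * f (t e) (s e) = ∑ e, w e * f (s e) (t e) := by
  have fiber : ∀ (g : N → N → R) i j,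
      ∑ e ∈ univ.filter (fun e => s e = i ∧ t e = j), w e * g (s e) (t e)
        = (∑ e ∈ univ.filter (fun e => s e = i ∧ t e = j), w e) * g i j := by
    intro g i j
    rw [sum_mul]
    refine sum_congr rfl fun e he => ?_
    obtain ⟨rfl, rfl⟩ := (mem_filter.1 he).2
    rfl
  calc ∑ e, w e * f (t e) (s e)
      = ∑ i, ∑ j, (∑ e ∈ univ.filter (fun e => s e = i ∧ t e = j), w e) * f j i := by
        rw [sum_eq_sum_sum_filter_source_target s t]
        simp only [fiber fun i j => f j i]
    _ = ∑ i, ∑ j, (∑ e ∈ univ.filter (fun e => s e = j ∧ t e = i), w e) * f j i :=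
        sum_congr rfl fun i _ => sum_congr rfl fun j _ => by rw [hw i j]
    _ = ∑ j, ∑ i, (∑ e ∈ univ.filter (fun e => s e = j ∧ t e = i), w e) * f j i :=
        Finset.sum_comm
    _ = ∑ e, w e * f (s e) (t e) := by
        rw [sum_eq_sum_sum_filter_source_target s t]
        simp only [fiber f]

theorem sum_mul_sub_mul_sub_eq_two_mul_sum [CommRing R] (s t : E → N) (w : E → R)
    (hw : ∀ i j, ∑ e ∈ univ.filter (fun e => s e = i ∧ t e = j), w e
      = ∑ e ∈ univ.filter (fun e => s e = j ∧ t e = i), w e)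
    (u v : N → R) :
    ∑ e, w e * ((u (s e) - u (t e)) * (v (t e) - v (s e)))
      = 2 * ∑ e, w e * (u (s e) * (v (t e) - v (s e))) := by
  rw [two_mul]
  nth_rewrite 1 [← sum_mul_apply_swap_of_symmetric s t w hw fun i j => u i * (v j - v i)]
  rw [← sum_add_distrib]
  exact sum_congr rfl fun e _ => by ring

end DetailedBalance

theorem hasFDerivAt_sum_mul_sq {ι 𝕜 V : Type*} [Fintype ι] [NontriviallyNormedField 𝕜]
    [NormedAddCommGroup V] [NormedSpace 𝕜 V] (c : ι → 𝕜) (L : ι → V →L[𝕜] 𝕜) (x : V) :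
    HasFDerivAt (fun y => ∑ i, c i * L i y ^ 2) (∑ i, (2 * c i * L i x) • L i) x := by
  refine HasFDerivAt.fun_sum fun i _ => ?_
  refine ((((L i).hasFDerivAt (x := x)).pow 2).const_mul (c i)).congr_fderiv ?_
  rw [smul_smul, nsmul_eq_mul]
  congr 1
  push_cast
  ring

theorem fderiv_dissipation_apply {N E : Type*} [Fintype N] [Fintype E] (s t : E → N)
    (r : E → ℝ) (q p v : N → ℝ) :
    fderiv ℝ (fun p : N → ℝ =>
        (1/4) * ∑ e, r e * q (s e) * (p (s e) / q (s e) - p (t e) / q (t e))^2) p v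
      = (1/2) * ∑ e, r e * q (s e) * (p (s e) / q (s e) - p (t e) / q (t e))
          * (v (s e) / q (s e) - v (t e) / q (t e)) := by
  let L : E → (N → ℝ) →L[ℝ] ℝ := fun e =>
    (q (s e))⁻¹ • ContinuousLinearMap.proj (s e) - (q (t e))⁻¹ • ContinuousLinearMap.proj (t e)
  have hL : ∀ e v, L e v = v (s e) / q (s e) - v (t e) / q (t e) := fun e v => by
    simp [L, div_eq_inv_mul]
  have hC : (fun p : N → ℝ =>
        (1/4) * ∑ e, r e * q (s e) * (p (s e) / q (s e) - p (t e) / q (t e))^2)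
      = fun p => ∑ e, r e * q (s e) / 4 * L e p ^ 2 := funext fun p => by
    simp only [hL, mul_sum]
    exact sum_congr rfl fun e _ => by ring
  rw [hC, (hasFDerivAt_sum_mul_sq _ L p).fderiv]
  simp only [_root_.sum_apply, _root_.smul_apply, hL, smul_eq_mul, mul_sum]
  exact sum_congr rfl fun e _ => by ring

theorem neg_q_partial_dissipation_general
    {N E : Type} [Fintype N] [Fintype E] [DecidableEq N]
    (s t : E → N) (r : E → ℝ)
    (q : N → ℝ) (hq : ∀ i, 0 < q i)
    (h_db : ∀ i j : N,
      ∑ e ∈ univ.filter (fun e => s e = i ∧ t e = j), r e * q i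
        = ∑ e ∈ univ.filter (fun e => s e = j ∧ t e = i), r e * q j)
    (C : (N → ℝ) → ℝ)
    (hC : ∀ p : N → ℝ,
      C p = (1/4) * ∑ e, r e * q (s e) * (p (s e) / q (s e) - p (t e) / q (t e))^2)
    (p : N → ℝ) (n : N) :
    -(q n * fderiv ℝ C p (Pi.single n 1)) =
      ∑ m, ((∑ e ∈ univ.filter (fun e => s e = m ∧ t e = n), r e * p m)
            - ∑ e ∈ univ.filter (fun e => s e = n ∧ t e = m), r e * p n) := by
  set w : E → ℝ := fun e => r e * q (s e)
  set u : N → ℝ := fun i => p i / q i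
  set δ : N → ℝ := Pi.single n 1
  have hflux : ∀ i j, ∑ e ∈ univ.filter (fun e => s e = i ∧ t e = j), w e
      = ∑ e ∈ univ.filter (fun e => s e = j ∧ t e = i), w e := fun i j => by
    convert h_db i j using 1 <;>
      exact sum_congr rfl fun e he => by simp only [w, (mem_filter.1 he).2.1]
  have hδ : ∀ i, q n * (δ i / q i) = δ i := fun i => by
    by_cases h : i = n
    · subst h; field_simp [(hq i).ne']
    · simp [δ, h]
  have hlhs : -(q n * fderiv ℝ C p δ)
      = (∑ e, w e * ((u (s e) - u (t e)) * (δ (t e) - δ (s e)))) / 2 := by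
    rw [funext hC, fderiv_dissipation_apply, mul_sum, mul_sum, sum_div, ← sum_neg_distrib]
    refine sum_congr rfl fun e _ => ?_
    linear_combination (-(w e * (u (s e) - u (t e)) / 2)) * (hδ (s e) - hδ (t e))
  have hrhs : ∑ m, ((∑ e ∈ univ.filter (fun e => s e = m ∧ t e = n), r e * p m)
        - ∑ e ∈ univ.filter (fun e => s e = n ∧ t e = m), r e * p n)
      = ∑ e, w e * (u (s e) * (δ (t e) - δ (s e))) := by
    rw [sum_inflow_sub_outflow]
    refine sum_congr rfl fun e _ => ?_
    simp only [w, u, δ]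
    field_simp [(hq (s e)).ne']
  rw [hlhs, hrhs, sum_mul_sub_mul_sub_eq_two_mul_sum s t w hflux]
  ring

/-- For a detailed balanced Markov process,
−q_n ∂C/∂p_n = ∑_{m} (∑_{e : m → n} r_e p_m − ∑_{e : n → m} r_e p_n),
where C is the extended dissipation functional. -/
theorem neg_q_partial_dissipation
    {N E : Type} [Fintype N] [Fintype E] [DecidableEq N]
    (s t : E → N) (r : E → ℝ) (hr : ∀ e, 0 < r e)
    (q : N → ℝ) (hq : ∀ i, 0 < q i)
    (h_db : ∀ i j : N,
      ∑ e ∈ univ.filter (fun e => s e = i ∧ t e = j), r e * q i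
        = ∑ e ∈ univ.filter (fun e => s e = j ∧ t e = i), r e * q j)
    (C : (N → ℝ) → ℝ)
    (hC : ∀ p : N → ℝ,
      C p = (1/4) * ∑ e, r e * q (s e) * (p (s e) / q (s e) - p (t e) / q (t e))^2)
    (p : N → ℝ) (n : N) :
    -(q n * fderiv ℝ C p (Pi.single n 1)) =
      ∑ m, ((∑ e ∈ univ.filter (fun e => s e = m ∧ t e = n), r e * p m)
            - ∑ e ∈ univ.filter (fun e => s e = n ∧ t e = m), r e * p n) :=
  neg_q_partial_dissipation_general s t r q hq h_db C hC p n
end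

section
/- Let f : N → N' be a map of finite sets with populations, i.e., q = q' ∘ f where q : N → (0,∞) and q' : N' → (0,∞). If a Markov process on N with rates r is detailed balanced with respect to q, then its pushforward along f (the Markov process on N' with the same edge set and rates but sources f ∘ s and targets f ∘ t) is detailed balanced with respect to q': ∑_{e : n → m} r_e q'_n = ∑_{e : m → n} r_e q'_m for all n, m ∈ N', where edges from n to m in the pushforward are the edges e of the original process with f(s(e)) = n and f(t(e)) = m. -/
open Finset

lemma pushforward_key
    {N N' E : Type} [Fintype N] [Fintype E]
    [DecidableEq N] [DecidableEq N']
    (f : N → N') (s t : E → N) (g : E → ℝ) (n m : N') :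
    ∑ e ∈ univ.filter (fun e => f (s e) = n ∧ f (t e) = m), g e
      = ∑ i : N, ∑ j : N, if f i = n ∧ f j = m then
          (∑ e ∈ univ.filter (fun e => s e = i ∧ t e = j), g e) else 0 := by
  have step : ∀ i j : N,
      (if f i = n ∧ f j = m then
          (∑ e ∈ univ.filter (fun e => s e = i ∧ t e = j), g e) else 0)
        = ∑ e : E, if s e = i ∧ t e = j ∧ f i = n ∧ f j = m then g e else 0 := by
    intro i j
    split
    · rename_i h
      rw [sum_filter]
      refine Finset.sum_congr rfl fun e _ => ?_
      by_cases h1 : s e = i ∧ t e = j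
      · simp [h1.1, h1.2, h.1, h.2]
      · rw [if_neg h1, if_neg (fun h' => h1 ⟨h'.1, h'.2.1⟩)]
    · rename_i h
      symm
      refine Finset.sum_eq_zero fun e _ => ?_
      exact if_neg (fun h' => h ⟨h'.2.2.1, h'.2.2.2⟩)
  simp only [step]
  rw [show (∑ i : N, ∑ j : N, ∑ e : E,
      if s e = i ∧ t e = j ∧ f i = n ∧ f j = m then g e else 0)
    = ∑ e : E, ∑ i : N, ∑ j : N,
      if s e = i ∧ t e = j ∧ f i = n ∧ f j = m then g e else 0 by
    calc (∑ i : N, ∑ j : N, ∑ e : E,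
          if s e = i ∧ t e = j ∧ f i = n ∧ f j = m then g e else 0)
        = ∑ i : N, ∑ e : E, ∑ j : N,
          if s e = i ∧ t e = j ∧ f i = n ∧ f j = m then g e else 0 :=
          Finset.sum_congr rfl fun i _ => Finset.sum_comm
      _ = ∑ e : E, ∑ i : N, ∑ j : N,
          if s e = i ∧ t e = j ∧ f i = n ∧ f j = m then g e else 0 :=
          Finset.sum_comm]
  rw [sum_filter]
  refine Finset.sum_congr rfl fun e _ => ?_
  rw [Finset.sum_eq_single (s e)]
  · rw [Finset.sum_eq_single (t e)]
    · by_cases h : f (s e) = n ∧ f (t e) = m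
      · simp [h.1, h.2]
      · rw [if_neg h, if_neg (fun h' => h ⟨h'.2.2.1, h'.2.2.2⟩)]
    · rintro j _ hj
      exact if_neg (fun h' => hj h'.2.1.symm)
    · simp
  · rintro i _ hi
    refine Finset.sum_eq_zero fun j _ => if_neg (fun h' => hi h'.1.symm)
  · simp

/-- The pushforward of a detailed balanced Markov process along a map of
finite sets with populations is detailed balanced. -/
theorem pushforward_detailed_balanced
    {N N' E : Type} [Fintype N] [Fintype N'] [Fintype E]
    [DecidableEq N] [DecidableEq N']
    (f : N → N') (q : N → ℝ) (q' : N' → ℝ)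
    (hq : ∀ i, 0 < q i) (hq' : ∀ i, 0 < q' i)
    (hqf : ∀ i, q i = q' (f i))
    (s t : E → N) (r : E → ℝ) (hr : ∀ e, 0 < r e)
    (h_db : ∀ i j : N,
      ∑ e ∈ univ.filter (fun e => s e = i ∧ t e = j), r e * q i
        = ∑ e ∈ univ.filter (fun e => s e = j ∧ t e = i), r e * q j) :
    ∀ n m : N',
      ∑ e ∈ univ.filter (fun e => f (s e) = n ∧ f (t e) = m), r e * q' n
        = ∑ e ∈ univ.filter (fun e => f (s e) = m ∧ f (t e) = n), r e * q' m := by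
  intro n m
  rw [pushforward_key f s t _ n m, pushforward_key f s t _ m n]
  conv_rhs => rw [Finset.sum_comm]
  refine Finset.sum_congr rfl fun i _ => Finset.sum_congr rfl fun j _ => ?_
  by_cases h : f i = n ∧ f j = m
  · rw [if_pos h, if_pos ⟨h.2, h.1⟩]
    have h1 : q' n = q i := by rw [hqf i, h.1]
    have h2 : q' m = q j := by rw [hqf j, h.2]
    rw [h1, h2]
    exact h_db i j
  · rw [if_neg h, if_neg (fun h' => h ⟨h'.2, h'.1⟩)]
end

section
/- Composition of Lagrangian relations is Lagrangian: if L ⊆ V̄ ⊕ W and L' ⊆ W̄ ⊕ U are Lagrangian subspaces, then the relational composite L'∘L = {(v, u) : ∃ w, (v, w) ∈ L ∧ (w, u) ∈ L'} is a Lagrangian subspace of V̄ ⊕ U. -/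
/-!
The composite `L' ∘ L` is the image of the fibre product `T = {(a, b) ∈ L × L' | a.2 = b.1}`
under `(a, b) ↦ (a.1, b.2)`. It is isotropic because the `W`-terms of the two forms cancel.
For its dimension, rank–nullity applied to `T ⊆ L × L'` and to `T → V × U` gives
`dim (L' ∘ L) + dim K + dim S = dim L + dim L'`, where `S ⊆ W` is spanned by the differences
`a.2 - b.1` and `K = {w | (0, w) ∈ L, (w, 0) ∈ L'}`. Since `L` and `L'` are Lagrangian, `K` is
the `ω_W`-complement of `S`, so `dim (L' ∘ L) = dim L + dim L' - dim W = (dim V + dim U) / 2`.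
-/

open Module
open LinearMap (BilinForm)

/-- A subspace L is Lagrangian with respect to a form Ω if it equals its
symplectic complement: Ω vanishes on L, and any vector Ω-orthogonal to L
lies in L. -/
def IsLagrangian {M : Type*} [AddCommGroup M] [Module ℝ M]
    (Ω : M → M → ℝ) (L : Submodule ℝ M) : Prop :=
  (∀ x ∈ L, ∀ y ∈ L, Ω x y = 0) ∧ (∀ z, (∀ y ∈ L, Ω z y = 0) → z ∈ L)

namespace LinearMap.BilinForm

variable {R M N : Type*} [CommRing R] [AddCommGroup M] [Module R M] [AddCommGroup N] [Module R N]
  {ωM : BilinForm R M} {ωN : BilinForm R N}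

variable (ωM ωN) in
def prodForm : BilinForm R (M × N) :=
  ωM.compl₁₂ (LinearMap.fst R M N) (LinearMap.fst R M N) +
    ωN.compl₁₂ (LinearMap.snd R M N) (LinearMap.snd R M N)

@[simp]
theorem prodForm_apply (x y : M × N) : prodForm ωM ωN x y = ωM x.1 y.1 + ωN x.2 y.2 := rfl

theorem isAlt_prodForm (hM : ωM.IsAlt) (hN : ωN.IsAlt) : (prodForm ωM ωN).IsAlt := fun x => by
  simp [hM.self_eq_zero, hN.self_eq_zero]

theorem separatingLeft_prodForm (hM : ωM.SeparatingLeft) (hN : ωN.SeparatingLeft) :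
    (prodForm ωM ωN).SeparatingLeft := fun x hx =>
  Prod.ext (hM _ fun y => by simpa using hx (y, 0)) (hN _ fun y => by simpa using hx (0, y))

end LinearMap.BilinForm

open LinearMap LinearMap.BilinForm

section Lagrangian

variable {E : Type*} [AddCommGroup E] [Module ℝ E] {B : BilinForm ℝ E} {L : Submodule ℝ E}

theorem isLagrangian_iff_orthogonal_eq (hB : B.IsRefl) :
    IsLagrangian (fun x y => B x y) L ↔ B.orthogonal L = L := by
  refine ⟨fun h => le_antisymm (fun z hz => h.2 z fun y hy => hB y z (hz y hy))
      (fun x hx y hy => h.1 y hy x hx), fun h => ⟨fun x hx y hy => ?_, fun z hz => ?_⟩⟩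
  · rw [← h] at hy
    exact hy x hx
  · rw [← h]
    exact fun y hy => hB z y (hz y hy)

theorem isLagrangian_iff_isotropic_and_finrank [FiniteDimensional ℝ E] (hB : B.IsRefl)
    (hnd : B.Nondegenerate) :
    IsLagrangian (fun x y => B x y) L ↔
      (∀ x ∈ L, ∀ y ∈ L, B x y = 0) ∧ 2 * finrank ℝ L = finrank ℝ E := by
  have hdim := finrank_orthogonal hnd L
  have hle := Submodule.finrank_le L
  rw [isLagrangian_iff_orthogonal_eq hB]
  constructor
  · intro h
    refine ⟨fun x hx y hy => ?_, by rw [h] at hdim; omega⟩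
    rw [← h] at hy
    exact hy x hx
  · rintro ⟨hiso, hdimL⟩
    exact (Submodule.eq_of_le_of_finrank_eq
      (fun y hy => mem_orthogonal_iff.2 fun x hx => hiso x hx y hy) (by omega)).symm

end Lagrangian

section LagrangianProd

variable {M N : Type*} [AddCommGroup M] [Module ℝ M] [AddCommGroup N] [Module ℝ N]
  {ωM : BilinForm ℝ M} {ωN : BilinForm ℝ N} {L : Submodule ℝ (M × N)}

theorem isLagrangian_prodForm_iff [FiniteDimensional ℝ M] [FiniteDimensional ℝ N]
    (hM : ωM.IsAlt) (hN : ωN.IsAlt) (hM' : ωM.SeparatingLeft) (hN' : ωN.SeparatingLeft) :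
    IsLagrangian (fun x y => prodForm ωM ωN x y) L ↔
      (∀ x ∈ L, ∀ y ∈ L, prodForm ωM ωN x y = 0) ∧
        2 * finrank ℝ L = finrank ℝ M + finrank ℝ N := by
  rw [isLagrangian_iff_isotropic_and_finrank (isAlt_prodForm hM hN).isRefl
    (.ofSeparatingLeft (separatingLeft_prodForm hM' hN')), finrank_prod]

theorem IsLagrangian.mk_zero_left_mem_iff
    (hL : IsLagrangian (fun x y => prodForm ωM ωN x y) L) (b : N) :
    ((0 : M), b) ∈ L ↔ ∀ y ∈ L, ωN b y.2 = 0 :=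
  ⟨fun hb y hy => by simpa using hL.1 _ hb y hy,
    fun hb => hL.2 _ fun y hy => by simpa using hb y hy⟩

theorem IsLagrangian.mk_zero_right_mem_iff
    (hL : IsLagrangian (fun x y => prodForm ωM ωN x y) L) (a : M) :
    (a, (0 : N)) ∈ L ↔ ∀ y ∈ L, ωM a y.1 = 0 :=
  ⟨fun ha y hy => by simpa using hL.1 _ ha y hy,
    fun ha => hL.2 _ fun y hy => by simpa using ha y hy⟩

end LagrangianProd

theorem Submodule.finrank_map_add_finrank_inf_ker {K M M₂ : Type*} [Field K] [AddCommGroup M]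
    [Module K M] [AddCommGroup M₂] [Module K M₂] (f : M →ₗ[K] M₂) (p : Submodule K M)
    [FiniteDimensional K p] :
    finrank K (p.map f) + finrank K ↥(p ⊓ LinearMap.ker f) = finrank K p := by
  have h := LinearMap.finrank_range_add_finrank_ker (f.domRestrict p)
  rwa [LinearMap.range_domRestrict, LinearMap.ker_domRestrict,
    ← Submodule.finrank_map_subtype_eq, Submodule.map_comap_subtype] at h

theorem Submodule.finrank_prod {K M M₂ : Type*} [Field K] [AddCommGroup M] [Module K M]
    [AddCommGroup M₂] [Module K M₂] (p : Submodule K M) (q : Submodule K M₂)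
    [FiniteDimensional K p] [FiniteDimensional K q] :
    finrank K (p.prod q) = finrank K p + finrank K q := by
  let e : p.prod q ≃ₗ[K] p × q :=
    { toFun := fun x => (⟨x.1.1, x.2.1⟩, ⟨x.1.2, x.2.2⟩)
      invFun := fun y => ⟨(y.1, y.2), y.1.2, y.2.2⟩
      map_add' := fun _ _ => rfl
      map_smul' := fun _ _ => rfl
      left_inv := fun _ => rfl
      right_inv := fun _ => rfl }
  rw [e.finrank_eq, Module.finrank_prod]

section RelComp

variable {R V W U : Type*} [CommRing R] [AddCommGroup V] [Module R V] [AddCommGroup W]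
  [Module R W] [AddCommGroup U] [Module R U]

def middleDiff : (V × W) × (W × U) →ₗ[R] W :=
  snd R V W ∘ₗ fst R (V × W) (W × U) - fst R W U ∘ₗ snd R (V × W) (W × U)

def outerProj : (V × W) × (W × U) →ₗ[R] V × U :=
  (fst R V W ∘ₗ fst R (V × W) (W × U)).prod (snd R W U ∘ₗ snd R (V × W) (W × U))

@[simp]
theorem middleDiff_apply (x : (V × W) × (W × U)) : middleDiff (R := R) x = x.1.2 - x.2.1 := rfl

@[simp]
theorem outerProj_apply (x : (V × W) × (W × U)) : outerProj (R := R) x = (x.1.1, x.2.2) := rfl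

variable (L : Submodule R (V × W)) (L' : Submodule R (W × U))

def relComp : Submodule R (V × U) := (L.prod L' ⊓ ker middleDiff).map outerProj

def relCompKer : Submodule R W := L.comap (inr R V W) ⊓ L'.comap (inl R W U)

variable {L L'}

theorem mem_relComp {p : V × U} : p ∈ relComp L L' ↔ ∃ w, (p.1, w) ∈ L ∧ (w, p.2) ∈ L' := by
  constructor
  · rintro ⟨⟨⟨v, w⟩, ⟨w', u⟩⟩, ⟨⟨hL, hL'⟩, hw⟩, rfl⟩
    obtain rfl : w = w' := sub_eq_zero.1 hw
    exact ⟨w, hL, hL'⟩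
  · rintro ⟨w, hL, hL'⟩
    exact ⟨((p.1, w), (w, p.2)), ⟨⟨hL, hL'⟩, by simp⟩, rfl⟩

theorem relComp_isotropic {ωV : BilinForm R V} {ωW : BilinForm R W} {ωU : BilinForm R U}
    (hL : ∀ x ∈ L, ∀ y ∈ L, prodForm ωV ωW x y = 0)
    (hL' : ∀ x ∈ L', ∀ y ∈ L', prodForm (-ωW) ωU x y = 0) :
    ∀ x ∈ relComp L L', ∀ y ∈ relComp L L', prodForm ωV ωU x y = 0 := by
  intro x hx y hy
  obtain ⟨w, hxL, hxL'⟩ := mem_relComp.1 hx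
  obtain ⟨w', hyL, hyL'⟩ := mem_relComp.1 hy
  have h := hL _ hxL _ hyL
  have h' := hL' _ hxL' _ hyL'
  simp only [prodForm_apply, BilinForm.neg_apply] at h h' ⊢
  linear_combination h + h'

end RelComp

section RelCompFinrank

variable {K V W U : Type*} [Field K] [AddCommGroup V] [Module K V] [AddCommGroup W]
  [Module K W] [AddCommGroup U] [Module K U]
  [FiniteDimensional K V] [FiniteDimensional K W] [FiniteDimensional K U]
  (L : Submodule K (V × W)) (L' : Submodule K (W × U))

theorem finrank_relComp_add_finrank_relCompKer :
    finrank K (relComp L L') + finrank K (relCompKer L L') +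
      finrank K ((L.prod L').map middleDiff) = finrank K L + finrank K L' := by
  have hP := Submodule.finrank_map_add_finrank_inf_ker middleDiff (L.prod L')
  have hT := Submodule.finrank_map_add_finrank_inf_ker outerProj (L.prod L' ⊓ ker middleDiff)
  have hinj : Function.Injective ((inr K V W).prod (inl K W U)) := fun w w' h =>
    congrArg (·.1.2) h
  have hker : L.prod L' ⊓ ker middleDiff ⊓ ker outerProj =
      (relCompKer L L').map ((inr K V W).prod (inl K W U)) := by
    ext ⟨⟨v, w⟩, ⟨w', u⟩⟩
    simp only [Submodule.mem_inf, Submodule.mem_prod, mem_ker, middleDiff_apply, sub_eq_zero,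
      outerProj_apply, Prod.mk_eq_zero, relCompKer, Submodule.mem_map, Submodule.mem_comap,
      coe_inr, coe_inl, LinearMap.prod_apply, Function.prod_apply, Prod.mk.injEq, existsAndEq,
      and_true]
    constructor
    · rintro ⟨⟨⟨hL, hL'⟩, rfl⟩, rfl, rfl⟩
      exact ⟨⟨hL, hL'⟩, rfl, rfl, rfl⟩
    · rintro ⟨⟨hL, hL'⟩, rfl, rfl, rfl⟩
      exact ⟨⟨⟨hL, hL'⟩, rfl⟩, rfl, rfl⟩
  rw [hker, ← (Submodule.equivMapOfInjective _ hinj _).finrank_eq] at hT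
  rw [Submodule.finrank_prod] at hP
  unfold relComp
  omega

end RelCompFinrank

section RelCompLagrangian

variable {V W U : Type*} [AddCommGroup V] [Module ℝ V] [AddCommGroup W] [Module ℝ W]
  [AddCommGroup U] [Module ℝ U] {ωV : BilinForm ℝ V} {ωW : BilinForm ℝ W} {ωU : BilinForm ℝ U}
  {L : Submodule ℝ (V × W)} {L' : Submodule ℝ (W × U)}

theorem relCompKer_eq_orthogonal (hL : IsLagrangian (fun x y => prodForm ωV ωW x y) L)
    (hL' : IsLagrangian (fun x y => prodForm (-ωW) ωU x y) L') :
    relCompKer L L' = orthogonal ωW.flip ((L.prod L').map middleDiff) := by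
  ext w
  simp only [relCompKer, Submodule.mem_inf, Submodule.mem_comap, inr_apply, inl_apply,
    hL.mk_zero_left_mem_iff, hL'.mk_zero_right_mem_iff, mem_orthogonal_iff, Submodule.mem_map]
  constructor
  · rintro ⟨hw, hw'⟩ _ ⟨x, ⟨hx, hx'⟩, rfl⟩
    simpa [hw _ hx] using hw' _ hx'
  · intro h
    refine ⟨fun y hy => ?_, fun y hy => ?_⟩
    · simpa using h _ ⟨(y, 0), ⟨hy, L'.zero_mem⟩, rfl⟩
    · simpa using h _ ⟨(0, y), ⟨L.zero_mem, hy⟩, rfl⟩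

theorem finrank_relComp_add_finrank_of_isLagrangian [FiniteDimensional ℝ V]
    [FiniteDimensional ℝ W] [FiniteDimensional ℝ U] (hW : ωW.SeparatingLeft)
    (hL : IsLagrangian (fun x y => prodForm ωV ωW x y) L)
    (hL' : IsLagrangian (fun x y => prodForm (-ωW) ωU x y) L') :
    finrank ℝ (relComp L L') + finrank ℝ W = finrank ℝ L + finrank ℝ L' := by
  have hsum := finrank_relComp_add_finrank_relCompKer L L'
  have hker : finrank ℝ (relCompKer L L') =
      finrank ℝ W - finrank ℝ ((L.prod L').map middleDiff) := by
    rw [relCompKer_eq_orthogonal hL hL']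
    exact finrank_orthogonal
      (flip_nondegenerate.2 (BilinForm.Nondegenerate.ofSeparatingLeft hW)) _
  have hle := Submodule.finrank_le ((L.prod L').map middleDiff)
  omega

end RelCompLagrangian

/-- Composition of Lagrangian relations is Lagrangian: if L ⊆ V̄ ⊕ W and
L' ⊆ W̄ ⊕ U are Lagrangian, so is the relational composite L' ∘ L ⊆ V̄ ⊕ U. -/
theorem lagrangian_relations_compose
    {V W U : Type}
    [AddCommGroup V] [Module ℝ V] [FiniteDimensional ℝ V]
    [AddCommGroup W] [Module ℝ W] [FiniteDimensional ℝ W]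
    [AddCommGroup U] [Module ℝ U] [FiniteDimensional ℝ U]
    (ωV : V →ₗ[ℝ] V →ₗ[ℝ] ℝ) (ωW : W →ₗ[ℝ] W →ₗ[ℝ] ℝ) (ωU : U →ₗ[ℝ] U →ₗ[ℝ] ℝ)
    (hValt : ∀ x y, ωV x y = -ωV y x) (hWalt : ∀ x y, ωW x y = -ωW y x)
    (hUalt : ∀ x y, ωU x y = -ωU y x)
    (hVnd : ∀ x, (∀ y, ωV x y = 0) → x = 0)
    (hWnd : ∀ x, (∀ y, ωW x y = 0) → x = 0)
    (hUnd : ∀ x, (∀ y, ωU x y = 0) → x = 0)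
    (ΩVW : V × W → V × W → ℝ) (hΩVW : ∀ a b, ΩVW a b = -ωV a.1 b.1 + ωW a.2 b.2)
    (ΩWU : W × U → W × U → ℝ) (hΩWU : ∀ a b, ΩWU a b = -ωW a.1 b.1 + ωU a.2 b.2)
    (ΩVU : V × U → V × U → ℝ) (hΩVU : ∀ a b, ΩVU a b = -ωV a.1 b.1 + ωU a.2 b.2)
    (L : Submodule ℝ (V × W)) (L' : Submodule ℝ (W × U))
    (hL : IsLagrangian ΩVW L) (hL' : IsLagrangian ΩWU L') :
    ∃ M : Submodule ℝ (V × U),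
      (M : Set (V × U)) = { p | ∃ w, (p.1, w) ∈ L ∧ (w, p.2) ∈ L' } ∧
      IsLagrangian ΩVU M := by
  have hV : BilinForm.IsAlt ωV := fun x => by linarith [hValt x x]
  have hW : BilinForm.IsAlt ωW := fun x => by linarith [hWalt x x]
  have hU : BilinForm.IsAlt ωU := fun x => by linarith [hUalt x x]
  have hVnd' : (-ωV).SeparatingLeft := fun x hx => hVnd x fun y => by simpa using hx y
  have hWnd' : (-ωW).SeparatingLeft := fun x hx => hWnd x fun y => by simpa using hx y
  obtain rfl : ΩVW = fun a b => prodForm (-ωV) ωW a b := by ext; simp [hΩVW]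
  obtain rfl : ΩWU = fun a b => prodForm (-ωW) ωU a b := by ext; simp [hΩWU]
  obtain rfl : ΩVU = fun a b => prodForm (-ωV) ωU a b := by ext; simp [hΩVU]
  refine ⟨relComp L L', Set.ext fun _ => mem_relComp, ?_⟩
  have hdim := finrank_relComp_add_finrank_of_isLagrangian hWnd hL hL'
  rw [isLagrangian_prodForm_iff hV.neg hW hVnd' hWnd] at hL
  rw [isLagrangian_prodForm_iff hW.neg hU hWnd' hUnd] at hL'
  rw [isLagrangian_prodForm_iff hV.neg hU hVnd' hUnd]
  exact ⟨relComp_isotropic hL.1 hL'.1, by omega⟩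
end
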